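/- Let w be an even integrable weight function on [-1,1], let (p_n) be monic-rescaled orthogonal polynomials on [-1,1] with respect to w with leading coefficients k_n and normalization p_n(a) = 1 for a fixed a ≥ 1, and let (q_n) be orthogonal polynomials on [-1,1] with respect to the weight w(x)(a² - x²) normalized by q_n(a) = 1 with leading coefficients k'_n. Then for n ≥ 2: p_n(x) - p_{n-2}(x) = (k_n/k'_{n-2})(x² - a²) q_{n-2}(x). -/

import Mathlib

open MeasureTheory Polynomial

/-!
Orthogonal polynomials are unique up to scalars: a polynomial of degree `< m` orthogonal to all
degrees `< m` has zero weighted norm, hence vanishes because the weight is positive a.e.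
Since `w` is even, `p_n(-x)` is again orthogonal, so `p_n(-x) = (-1)^n p_n(x)` and
`p_n(-a) = (-1)^n = p_{n-2}(-a)`. Thus `p_n - p_{n-2}` vanishes at `±a` and equals `(x² - a²) r`
with `r` of degree `n - 2` and leading coefficient `k_n`. Orthogonality of `p_n - p_{n-2}` to
degrees `< n - 2` for `w` is orthogonality of `r` for `w(x)(a² - x²)`, so
`r = (k_n/k'_{n-2}) q_{n-2}`.
-/

theorem Polynomial.Monic.natDegree_eq_and_coeff_eq {R : Type*} [Semiring R] {q r : R[X]}
    {m : ℕ} (hq : q.Monic) (h : (q * r).natDegree = q.natDegree + m) :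
    r.natDegree = m ∧ r.coeff m = (q * r).coeff (q.natDegree + m) := by
  rcases eq_or_ne r 0 with rfl | hr0
  · simp only [mul_zero, natDegree_zero] at h
    simp [(by omega : m = 0)]
  have hm : r.natDegree = m := by
    have := hq.natDegree_mul' hr0
    omega
  refine ⟨hm, ?_⟩
  rw [← hm, coeff_mul_degree_add_degree, hq.leadingCoeff, one_mul]
  rfl

theorem X_sq_sub_C_sq_dvd {R : Type*} [CommRing R] [IsDomain R] {P : R[X]} {a : R}
    (ha : a ≠ -a) (h₁ : P.IsRoot a) (h₂ : P.IsRoot (-a)) : X ^ 2 - C (a ^ 2) ∣ P := by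
  obtain ⟨e, rfl⟩ := dvd_iff_isRoot.mpr h₁
  have he : e.IsRoot (-a) := by
    simpa [sub_eq_zero, ha.symm] using h₂
  obtain ⟨r, rfl⟩ := dvd_iff_isRoot.mpr he
  exact ⟨r, by rw [C_pow, map_neg]; ring⟩

structure IsWeight (W : ℝ → ℝ) : Prop where
  pos : ∀ x ∈ Set.Ioo (-1 : ℝ) 1, 0 < W x
  intervalIntegrable_pow_mul : ∀ k : ℕ, IntervalIntegrable (fun x => x ^ k * W x) volume (-1) 1

def IsOrthogonalBelow (W : ℝ → ℝ) (m : ℕ) (P : ℝ[X]) : Prop :=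
  ∀ k < m, ∫ x in (-1 : ℝ)..1, P.eval x * x ^ k * W x = 0

variable {W : ℝ → ℝ} {m n : ℕ} {P S : ℝ[X]}

namespace IsWeight

theorem intervalIntegrable_eval_mul (hW : IsWeight W) (P : ℝ[X]) :
    IntervalIntegrable (fun x => P.eval x * W x) volume (-1) 1 := by
  induction P using Polynomial.induction_on' with
  | add P S hP hS => simpa only [eval_add, add_mul] using hP.add hS
  | monomial k c =>
    simpa only [eval_monomial, mul_assoc] using (hW.intervalIntegrable_pow_mul k).const_mul c

theorem intervalIntegrable_eval_mul_pow_mul (hW : IsWeight W) (P : ℝ[X]) (k : ℕ) :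
    IntervalIntegrable (fun x => P.eval x * x ^ k * W x) volume (-1) 1 := by
  have h := hW.intervalIntegrable_eval_mul (P * X ^ k)
  simp only [eval_mul, eval_pow, eval_X] at h
  exact h

theorem integral_eval_mul_self_mul_pos (hW : IsWeight W) (hP : P ≠ 0) :
    0 < ∫ x in (-1 : ℝ)..1, P.eval x * P.eval x * W x := by
  have hnonneg :
      0 ≤ᵐ[volume.restrict (Set.uIoc (-1 : ℝ) 1)] fun x => P.eval x * P.eval x * W x := by
    rw [Set.uIoc_of_le (by norm_num)]
    refine ae_restrict_of_ae_eq_of_ae_restrict Ioo_ae_eq_Ioc ?_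
    exact ae_restrict_of_forall_mem measurableSet_Ioo fun x hx =>
      mul_nonneg (mul_self_nonneg _) (hW.pos x hx).le
  have hsupp : Set.Ioo (-1 : ℝ) 1 \ {x | P.IsRoot x} ⊆
      Function.support (fun x => P.eval x * P.eval x * W x) ∩ Set.Ioc (-1) 1 :=
    fun x ⟨hx, hroot⟩ => ⟨mul_ne_zero (mul_self_ne_zero.mpr hroot) (hW.pos x hx).ne',
      Set.Ioo_subset_Ioc_self hx⟩
  rw [intervalIntegral.integral_pos_iff_support_of_nonneg_ae' hnonneg
    (by simpa using hW.intervalIntegrable_eval_mul (P * P))]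
  refine ⟨by norm_num, lt_of_lt_of_le ?_ (measure_mono hsupp)⟩
  rw [measure_sdiff_null ((finite_setOfPred_isRoot hP).measure_zero _)]
  exact (Measure.measure_Ioo_pos _).mpr (by norm_num)

theorem mul_sq_sub_sq (hW : IsWeight W) {a : ℝ} (ha : 1 ≤ a) :
    IsWeight fun x => W x * (a ^ 2 - x ^ 2) where
  pos x hx := mul_pos (hW.pos x hx) (by nlinarith [hx.1, hx.2])
  intervalIntegrable_pow_mul k := by
    convert ((hW.intervalIntegrable_pow_mul k).const_mul (a ^ 2)).sub
      (hW.intervalIntegrable_pow_mul (k + 2)) using 1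
    funext x
    ring

end IsWeight

namespace IsOrthogonalBelow

theorem mono (hP : IsOrthogonalBelow W m P) (hnm : n ≤ m) : IsOrthogonalBelow W n P :=
  fun k hk => hP k (hk.trans_le hnm)

theorem sub (hW : IsWeight W) (hP : IsOrthogonalBelow W m P) (hS : IsOrthogonalBelow W m S) :
    IsOrthogonalBelow W m (P - S) := fun k hk => by
  simp only [eval_sub, sub_mul]
  rw [intervalIntegral.integral_sub (hW.intervalIntegrable_eval_mul_pow_mul P k)
    (hW.intervalIntegrable_eval_mul_pow_mul S k), hP k hk, hS k hk, sub_zero]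

theorem C_mul (hP : IsOrthogonalBelow W m P) (c : ℝ) : IsOrthogonalBelow W m (C c * P) :=
  fun k hk => by
    simp only [eval_mul, eval_C, mul_assoc, intervalIntegral.integral_const_mul]
    simp only [← mul_assoc, hP k hk, mul_zero]

theorem comp_neg_X (hW_even : ∀ x, W (-x) = W x) (hP : IsOrthogonalBelow W m P) :
    IsOrthogonalBelow W m (P.comp (-X)) := fun k hk =>
  calc ∫ x in (-1 : ℝ)..1, (P.comp (-X)).eval x * x ^ k * W x
      = ∫ x in (-1 : ℝ)..1, (fun y => P.eval y * (-y) ^ k * W y) (-x) := by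
        simp only [eval_comp, eval_neg, eval_X, neg_neg, hW_even]
    _ = ∫ y in (-1 : ℝ)..1, (-1) ^ k * (P.eval y * y ^ k * W y) := by
        rw [intervalIntegral.integral_comp_neg (fun y => P.eval y * (-y) ^ k * W y), neg_neg]
        exact intervalIntegral.integral_congr fun y _ => by ring
    _ = 0 := by rw [intervalIntegral.integral_const_mul, hP k hk, mul_zero]

theorem of_X_sq_sub_C_mul {a : ℝ} (hP : IsOrthogonalBelow W m ((X ^ 2 - C (a ^ 2)) * P)) :
    IsOrthogonalBelow (fun x => W x * (a ^ 2 - x ^ 2)) m P := fun k hk => by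
  have h := congrArg Neg.neg (hP k hk)
  rw [neg_zero, ← intervalIntegral.integral_neg] at h
  rw [← h]
  congr 1 with x
  simp only [eval_mul, eval_sub, eval_pow, eval_X, eval_C]
  ring

theorem integral_eval_mul_eval_mul_eq_zero (hW : IsWeight W) (hP : IsOrthogonalBelow W m P)
    (hS : S.natDegree < m) : ∫ x in (-1 : ℝ)..1, P.eval x * S.eval x * W x = 0 := by
  have hexpand : ∀ x, P.eval x * S.eval x * W x =
      ∑ i ∈ Finset.range m, S.coeff i * (P.eval x * x ^ i * W x) := fun x => by
    rw [eval_eq_sum_range' hS, Finset.mul_sum, Finset.sum_mul]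
    exact Finset.sum_congr rfl fun i _ => by ring
  simp only [hexpand]
  rw [intervalIntegral.integral_finsetSum fun i _ =>
    (hW.intervalIntegrable_eval_mul_pow_mul P i).const_mul _]
  exact Finset.sum_eq_zero fun i hi => by
    rw [intervalIntegral.integral_const_mul, hP i (Finset.mem_range.mp hi), mul_zero]

theorem eq_zero (hW : IsWeight W) (hP : IsOrthogonalBelow W m P) (hdeg : P.degree < m) :
    P = 0 := by
  by_contra hP0
  have hzero := hP.integral_eval_mul_eval_mul_eq_zero hW
    ((natDegree_lt_iff_degree_lt hP0).mpr hdeg)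
  exact (hW.integral_eval_mul_self_mul_pos hP0).ne' hzero

theorem eq_C_mul (hW : IsWeight W) (hP : IsOrthogonalBelow W m P) (hS : IsOrthogonalBelow W m S)
    (hPdeg : P.natDegree ≤ m) (hSdeg : S.natDegree ≤ m) (hS0 : S.coeff m ≠ 0) :
    P = C (P.coeff m / S.coeff m) * S := by
  refine sub_eq_zero.mp ((hP.sub hW (hS.C_mul _)).eq_zero hW ?_)
  refine (degree_lt_iff_coeff_zero _ _).mpr fun j hj => ?_
  rcases hj.eq_or_lt with rfl | hj
  · simp [div_mul_cancel₀ _ hS0]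
  · rw [coeff_sub, coeff_C_mul, coeff_eq_zero_of_natDegree_lt (hPdeg.trans_lt hj),
      coeff_eq_zero_of_natDegree_lt (hSdeg.trans_lt hj), mul_zero, sub_zero]

theorem comp_neg_X_eq (hW : IsWeight W) (hW_even : ∀ x, W (-x) = W x)
    (hP : IsOrthogonalBelow W P.natDegree P) : P.comp (-X) = C ((-1) ^ P.natDegree) * P := by
  rcases eq_or_ne P 0 with rfl | hP0
  · simp
  have hdeg : (P.comp (-X)).natDegree = P.natDegree := by simp [natDegree_comp]
  have hcoeff : (P.comp (-X)).coeff P.natDegree = (-1) ^ P.natDegree * P.leadingCoeff := by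
    rw [← comp_neg_X_leadingCoeff_eq, leadingCoeff, hdeg]
  rw [(hP.comp_neg_X hW_even).eq_C_mul hW hP hdeg.le le_rfl
    (leadingCoeff_ne_zero.mpr hP0), hcoeff, ← leadingCoeff, mul_div_cancel_right₀ _
    (leadingCoeff_ne_zero.mpr hP0)]

theorem eval_neg (hW : IsWeight W) (hW_even : ∀ x, W (-x) = W x)
    (hP : IsOrthogonalBelow W P.natDegree P) (a : ℝ) :
    P.eval (-a) = (-1) ^ P.natDegree * P.eval a := by
  simpa using congrArg (eval a) (hP.comp_neg_X_eq hW hW_even)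

end IsOrthogonalBelow

theorem even_weight_difference_formula_general
    (w : ℝ → ℝ) (a : ℝ) (p Q : ℕ → Polynomial ℝ)
    (hw_even : ∀ x, w (-x) = w x)
    (hw_pos : ∀ x ∈ Set.Ioo (-1 : ℝ) 1, 0 < w x)
    (hw_int : ∀ k : ℕ, IntervalIntegrable (fun x => x ^ k * w x) volume (-1) 1)
    (ha : 1 ≤ a)
    (hpdeg : ∀ n, (p n).natDegree = n)
    (hporth : ∀ n k, k < n → ∫ x in (-1 : ℝ)..1, (p n).eval x * x ^ k * w x = 0)
    (hpnorm : ∀ n, (p n).eval a = 1)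
    (hQdeg : ∀ n, (Q n).natDegree = n)
    (hQorth : ∀ n k, k < n →
      ∫ x in (-1 : ℝ)..1, (Q n).eval x * x ^ k * (w x * (a ^ 2 - x ^ 2)) = 0)
    (hQnorm : ∀ n, (Q n).eval a = 1)
    (n : ℕ) (hn : 2 ≤ n) :
    ∀ x : ℝ, (p n).eval x - (p (n - 2)).eval x =
      (p n).coeff n / (Q (n - 2)).coeff (n - 2) * (x ^ 2 - a ^ 2) * (Q (n - 2)).eval x := by
  obtain ⟨m, rfl⟩ : ∃ m, n = m + 2 := ⟨n - 2, by omega⟩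
  rw [Nat.add_sub_cancel]
  have hW : IsWeight w := ⟨hw_pos, hw_int⟩
  have hp_eval_neg (j : ℕ) : (p j).eval (-a) = (-1) ^ j := by
    have hj : IsOrthogonalBelow w (p j).natDegree (p j) := by rw [hpdeg]; exact hporth j
    rw [hj.eval_neg hW hw_even, hpnorm, hpdeg, mul_one]
  obtain ⟨r, hr⟩ : X ^ 2 - C (a ^ 2) ∣ p (m + 2) - p m :=
    X_sq_sub_C_sq_dvd (by linarith) (by simp [hpnorm]) (by simp [hp_eval_neg, pow_succ])
  have hdeg : ((X ^ 2 - C (a ^ 2)) * r).natDegree = (X ^ 2 - C (a ^ 2)).natDegree + m := by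
    rw [← hr, natDegree_X_pow_sub_C, natDegree_sub_eq_left_of_natDegree_lt] <;>
      simp [hpdeg, add_comm]
  obtain ⟨hr_deg, hr_coeff⟩ :=
    (monic_X_pow_sub_C (a ^ 2) two_ne_zero).natDegree_eq_and_coeff_eq hdeg
  have hk : r.coeff m = (p (m + 2)).coeff (m + 2) := by
    rw [hr_coeff, ← hr, natDegree_X_pow_sub_C, add_comm, coeff_sub,
      coeff_eq_zero_of_natDegree_lt (p := p m) (by rw [hpdeg]; omega), sub_zero]
  have hr_orth : IsOrthogonalBelow (fun x => w x * (a ^ 2 - x ^ 2)) m r :=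
    .of_X_sq_sub_C_mul <| hr ▸
      (IsOrthogonalBelow.mono (hporth (m + 2)) (by omega)).sub hW (hporth m)
  have hQ0 : (Q m).coeff m ≠ 0 := by
    have hQ : Q m ≠ 0 := fun h => by simpa [h] using hQnorm m
    simpa only [leadingCoeff, hQdeg] using leadingCoeff_ne_zero.mpr hQ
  have hrQ := hr_orth.eq_C_mul (hW.mul_sq_sub_sq ha) (hQorth m) hr_deg.le (hQdeg m).le hQ0
  intro x
  rw [← eval_sub, hr, hrQ, hk]
  simp only [eval_mul, eval_sub, eval_pow, eval_X, eval_C]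
  ring

/-- If `(p_n)` are orthogonal polynomials on `[-1,1]` for an even weight `w`, normalized by
`p_n(a) = 1` with `a ≥ 1`, and `(Q_n)` are orthogonal polynomials for the weight
`w(x)(a²-x²)` normalized by `Q_n(a) = 1`, then for `n ≥ 2`,
`p_n(x) - p_{n-2}(x) = (k_n/k'_{n-2})(x² - a²) Q_{n-2}(x)`,
where `k_n`, `k'_{n-2}` are the leading coefficients of `p_n`, `Q_{n-2}`. -/
theorem even_weight_difference_formula
    (w : ℝ → ℝ) (a : ℝ) (p Q : ℕ → Polynomial ℝ)
    (hw_even : ∀ x, w (-x) = w x)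
    (hw_nonneg : ∀ x ∈ Set.Icc (-1 : ℝ) 1, 0 ≤ w x)
    (hw_pos : ∀ x ∈ Set.Ioo (-1 : ℝ) 1, 0 < w x)
    (hw_int : ∀ k : ℕ, IntervalIntegrable (fun x => x ^ k * w x) volume (-1) 1)
    (ha : 1 ≤ a)
    (hpdeg : ∀ n, (p n).natDegree = n)
    (hporth : ∀ n k, k < n → ∫ x in (-1 : ℝ)..1, (p n).eval x * x ^ k * w x = 0)
    (hpnorm : ∀ n, (p n).eval a = 1)
    (hQdeg : ∀ n, (Q n).natDegree = n)
    (hQorth : ∀ n k, k < n →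
      ∫ x in (-1 : ℝ)..1, (Q n).eval x * x ^ k * (w x * (a ^ 2 - x ^ 2)) = 0)
    (hQnorm : ∀ n, (Q n).eval a = 1)
    (n : ℕ) (hn : 2 ≤ n) :
    ∀ x : ℝ, (p n).eval x - (p (n - 2)).eval x =
      (p n).coeff n / (Q (n - 2)).coeff (n - 2) * (x ^ 2 - a ^ 2) * (Q (n - 2)).eval x :=
  even_weight_difference_formula_general w a p Q hw_even hw_pos hw_int ha hpdeg hporth hpnorm hQdeg
    hQorth hQnorm n hn
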